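/- Let X ∈ ℝ^{K×d} be a feature matrix, θ ∈ ℝ^d, a′ ∈ [K] an action, and R ∈ ℝ a reward value with |R| ≤ R_max. Define the importance-sampled reward estimate r̂ ∈ ℝ^K by r̂(a) = 1{a = a′} R / π_θ(a′). Then the stochastic gradient ĝ = X^⊤ (diag(π_θ) − π_θ π_θ^⊤) r̂ satisfies ‖ĝ‖₂² ≤ 2 λ_max(X^⊤X) R_max² (1 − π_θ(a′))² ≤ 2 λ_max(X^⊤X) R_max². -/

import Mathlib

open scoped BigOperators

/-- Log-linear (softmax) policy `π_θ = softmax(Xθ)`. -/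
noncomputable def policy {K d : ℕ} (X : Matrix (Fin K) (Fin d) ℝ) (θ : Fin d → ℝ) (a : Fin K) : ℝ :=
  Real.exp (∑ j, X a j * θ j) / ∑ b, Real.exp (∑ j, X b j * θ j)

/-- Largest eigenvalue of `XᵀX`. -/
noncomputable def lamMax {K d : ℕ} (X : Matrix (Fin K) (Fin d) ℝ) : ℝ :=
  ⨆ i, (show (Matrix.transpose X * X).IsHermitian by simpa using Matrix.isHermitian_conjTranspose_mul_self X).eigenvalues i

open Matrix in
lemma rayleigh_bound (n : Type*) [Fintype n] [DecidableEq n] (A : Matrix n n ℝ)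
    (hA : A.IsHermitian) (x : n → ℝ) :
    x ⬝ᵥ (A *ᵥ x) ≤ (⨆ i, hA.eigenvalues i) * (x ⬝ᵥ x) := by
  set U : Matrix n n ℝ := (hA.eigenvectorUnitary : Matrix n n ℝ) with hU
  have hUU : U * star U = 1 := (Matrix.mem_unitaryGroup_iff).mp hA.eigenvectorUnitary.2
  set y : n → ℝ := star U *ᵥ x with hy
  have hvm : x ᵥ* U = y := by
    rw [hy, Matrix.star_eq_conjTranspose, conjTranspose_eq_transpose_of_trivial,
      mulVec_transpose]
  have h1 : x ⬝ᵥ (A *ᵥ x) = ∑ i, hA.eigenvalues i * y i ^ 2 := by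
    conv_lhs => rw [hA.spectral_theorem, Unitary.conjStarAlgAut_apply]
    rw [← mulVec_mulVec, ← mulVec_mulVec, dotProduct_mulVec, hvm, ← hy]
    have : Matrix.diagonal ((RCLike.ofReal : ℝ → ℝ) ∘ hA.eigenvalues)
        = Matrix.diagonal hA.eigenvalues := by simp [Function.comp]
    rw [this]
    simp only [mulVec_diagonal, dotProduct]
    exact Finset.sum_congr rfl fun i _ => by ring
  have h2 : y ⬝ᵥ y = x ⬝ᵥ x := by
    rw [hy, dotProduct_mulVec]
    have : (star U *ᵥ x) ᵥ* star U = (U * star U) *ᵥ x := by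
      nth_rewrite 2 [Matrix.star_eq_conjTranspose]
      rw [conjTranspose_eq_transpose_of_trivial, vecMul_transpose, mulVec_mulVec]
    rw [this, hUU, one_mulVec]
  have hb : BddAbove (Set.range hA.eigenvalues) := Set.Finite.bddAbove (Set.finite_range _)
  rw [h1]
  calc ∑ i, hA.eigenvalues i * y i ^ 2
      ≤ ∑ i, (⨆ j, hA.eigenvalues j) * y i ^ 2 := by
        apply Finset.sum_le_sum
        intro i _
        exact mul_le_mul_of_nonneg_right (le_ciSup hb i) (sq_nonneg _)
    _ = (⨆ j, hA.eigenvalues j) * (y ⬝ᵥ y) := by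
        rw [← Finset.mul_sum]; congr 1; simp [dotProduct, sq]
    _ = (⨆ j, hA.eigenvalues j) * (x ⬝ᵥ x) := by rw [h2]

lemma lamMax_nonneg {K d : ℕ} (X : Matrix (Fin K) (Fin d) ℝ) : 0 ≤ lamMax X := by
  rcases isEmpty_or_nonempty (Fin d) with h | h
  · simp [lamMax, Real.iSup_of_isEmpty]
  · obtain ⟨i⟩ := h
    refine le_trans ?_ (le_ciSup (Set.Finite.bddAbove (Set.finite_range _)) i)
    exact (Matrix.PosSemidef.eigenvalues_nonneg
      (by simpa using Matrix.posSemidef_conjTranspose_mul_self X) i)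

open Matrix in
lemma transpose_mulVec_sq_le {K d : ℕ} (X : Matrix (Fin K) (Fin d) ℝ) (v : Fin K → ℝ) :
    (Xᵀ *ᵥ v) ⬝ᵥ (Xᵀ *ᵥ v) ≤ lamMax X * (v ⬝ᵥ v) := by
  set u : Fin d → ℝ := Xᵀ *ᵥ v with hu
  have huu : 0 ≤ u ⬝ᵥ u := Finset.sum_nonneg fun i _ => mul_self_nonneg _
  have hvv : 0 ≤ v ⬝ᵥ v := Finset.sum_nonneg fun i _ => mul_self_nonneg _
  have hid : u ⬝ᵥ u = v ⬝ᵥ (X *ᵥ u) := by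
    nth_rewrite 1 [hu]
    rw [mulVec_transpose, ← dotProduct_mulVec]
  have hray : (X *ᵥ u) ⬝ᵥ (X *ᵥ u) ≤ lamMax X * (u ⬝ᵥ u) := by
    have h3 : (X *ᵥ u) ⬝ᵥ (X *ᵥ u) = u ⬝ᵥ ((Xᵀ * X) *ᵥ u) := by
      rw [dotProduct_mulVec (X *ᵥ u), ← mulVec_transpose, mulVec_mulVec, dotProduct_comm]
    rw [h3]
    exact rayleigh_bound _ (Xᵀ * X) (by simpa using Matrix.isHermitian_conjTranspose_mul_self X) u
  have hcs : (v ⬝ᵥ (X *ᵥ u)) ^ 2 ≤ (v ⬝ᵥ v) * ((X *ᵥ u) ⬝ᵥ (X *ᵥ u)) := by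
    have := Finset.sum_mul_sq_le_sq_mul_sq Finset.univ v (X *ᵥ u)
    simpa [dotProduct, sq] using this
  have key : (u ⬝ᵥ u) ^ 2 ≤ (v ⬝ᵥ v) * (lamMax X * (u ⬝ᵥ u)) := by
    calc (u ⬝ᵥ u) ^ 2 = (v ⬝ᵥ (X *ᵥ u)) ^ 2 := by rw [← hid]
      _ ≤ (v ⬝ᵥ v) * ((X *ᵥ u) ⬝ᵥ (X *ᵥ u)) := hcs
      _ ≤ (v ⬝ᵥ v) * (lamMax X * (u ⬝ᵥ u)) := mul_le_mul_of_nonneg_left hray hvv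
  rcases eq_or_lt_of_le huu with h | h
  · rw [← h]
    exact mul_nonneg (lamMax_nonneg X) hvv
  · nlinarith [key, h]

open Matrix

/-- The stochastic gradient `ĝ = X^⊤ (diag(π_θ) − π_θ π_θ^⊤) r̂` computed from the
importance-sampled reward estimate `r̂(a) = 1{a = a′} R / π_θ(a′)` satisfies
`‖ĝ‖₂² ≤ 2 λ_max(XᵀX) R_max² (1 − π_θ(a′))² ≤ 2 λ_max(XᵀX) R_max²`. -/
theorem stochastic_gradient_bounded {K d : ℕ}
    (X : Matrix (Fin K) (Fin d) ℝ) (θ : Fin d → ℝ) (a' : Fin K)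
    (R Rmax : ℝ) (hRmax : 0 < Rmax) (hR : |R| ≤ Rmax) :
    let rh : Fin K → ℝ := fun a => if a = a' then R / policy X θ a' else 0
    let g : Fin d → ℝ := fun j =>
      ∑ a, X a j * (policy X θ a * (rh a - ∑ b, policy X θ b * rh b))
    (∑ j, (g j) ^ 2) ≤ 2 * lamMax X * Rmax ^ 2 * (1 - policy X θ a') ^ 2 ∧
      2 * lamMax X * Rmax ^ 2 * (1 - policy X θ a') ^ 2 ≤ 2 * lamMax X * Rmax ^ 2 := by
  intro rh g
  set π : Fin K → ℝ := policy X θ with hπ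
  have hden : 0 < ∑ b, Real.exp (∑ j, X b j * θ j) :=
    Finset.sum_pos (fun b _ => Real.exp_pos _) ⟨a', Finset.mem_univ a'⟩
  have hπpos : ∀ a, 0 < π a := fun a => div_pos (Real.exp_pos _) hden
  have hπsum : ∑ a, π a = 1 := by
    simp only [hπ, policy, ← Finset.sum_div]
    exact div_self hden.ne'
  have hπle1 : π a' ≤ 1 := by
    rw [← hπsum]
    exact Finset.single_le_sum (fun i _ => (hπpos i).le) (Finset.mem_univ a')
  have hS : (∑ b, π b * rh b) = R := by
    rw [Finset.sum_eq_single a']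
    · show π a' * (if a' = a' then R / π a' else 0) = R
      rw [if_pos rfl, mul_div_cancel₀ _ (hπpos a').ne']
    · intro b _ hb
      show π b * (if b = a' then R / π a' else 0) = 0
      rw [if_neg hb, mul_zero]
    · intro h; exact absurd (Finset.mem_univ a') h
  set v : Fin K → ℝ := fun a => π a * (rh a - R) with hv
  have hg : ∀ j, g j = (Matrix.transpose X *ᵥ v) j := by
    intro j
    simp only [Matrix.mulVec, Matrix.transpose_apply, dotProduct, hv]
    exact Finset.sum_congr rfl fun a _ => by rw [hS]
  have hgsum : (∑ j, (g j) ^ 2) = (Matrix.transpose X *ᵥ v) ⬝ᵥ (Matrix.transpose X *ᵥ v) := by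
    simp only [dotProduct]
    exact Finset.sum_congr rfl fun j _ => by rw [hg j, sq]
  have hva' : v a' = R * (1 - π a') := by
    simp only [hv]
    show π a' * ((if a' = a' then R / π a' else 0) - R) = R * (1 - π a')
    rw [if_pos rfl, mul_sub, mul_div_cancel₀ _ (hπpos a').ne']
    ring
  have hvvb : v ⬝ᵥ v ≤ 2 * R ^ 2 * (1 - π a') ^ 2 := by
    have hsplit : v ⬝ᵥ v = v a' * v a' + ∑ a ∈ Finset.univ.erase a', v a * v a := by
      rw [dotProduct, ← Finset.add_sum_erase _ _ (Finset.mem_univ a')]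
    have hrest : ∀ a ∈ Finset.univ.erase a', v a * v a = R ^ 2 * π a ^ 2 := by
      intro a ha
      have hne : a ≠ a' := Finset.ne_of_mem_erase ha
      have h0 : rh a = 0 := if_neg hne
      simp only [hv, h0]
      ring
    have hsumπ : ∑ a ∈ Finset.univ.erase a', π a = 1 - π a' := by
      have := Finset.add_sum_erase _ π (Finset.mem_univ a')
      have h2 : π a' + ∑ a ∈ Finset.univ.erase a', π a = 1 := by rw [this, hπsum]
      linarith
    have hsq : ∑ a ∈ Finset.univ.erase a', π a ^ 2 ≤ (1 - π a') ^ 2 := by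
      rw [← hsumπ]
      exact Finset.sum_sq_le_sq_sum_of_nonneg (fun i _ => (hπpos i).le)
    calc v ⬝ᵥ v = R ^ 2 * (1 - π a') ^ 2 + R ^ 2 * ∑ a ∈ Finset.univ.erase a', π a ^ 2 := by
          rw [hsplit, hva', Finset.sum_congr rfl hrest, ← Finset.mul_sum]; ring
      _ ≤ R ^ 2 * (1 - π a') ^ 2 + R ^ 2 * (1 - π a') ^ 2 := by
          have := mul_le_mul_of_nonneg_left hsq (sq_nonneg R)
          linarith
      _ = 2 * R ^ 2 * (1 - π a') ^ 2 := by ring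
  have hR2 : R ^ 2 ≤ Rmax ^ 2 := by
    rw [← sq_abs]
    exact pow_le_pow_left₀ (abs_nonneg R) hR 2
  have hlam : 0 ≤ lamMax X := lamMax_nonneg X
  have hmain : (∑ j, (g j) ^ 2) ≤ 2 * lamMax X * Rmax ^ 2 * (1 - π a') ^ 2 := by
    rw [hgsum]
    calc (Matrix.transpose X *ᵥ v) ⬝ᵥ (Matrix.transpose X *ᵥ v)
        ≤ lamMax X * (v ⬝ᵥ v) := transpose_mulVec_sq_le X v
      _ ≤ lamMax X * (2 * R ^ 2 * (1 - π a') ^ 2) := mul_le_mul_of_nonneg_left hvvb hlam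
      _ ≤ lamMax X * (2 * Rmax ^ 2 * (1 - π a') ^ 2) := by
          refine mul_le_mul_of_nonneg_left ?_ hlam
          nlinarith [sq_nonneg (1 - π a')]
      _ = 2 * lamMax X * Rmax ^ 2 * (1 - π a') ^ 2 := by ring
  refine ⟨hmain, ?_⟩
  have h01 : (1 - π a') ^ 2 ≤ 1 := by
    have := hπpos a'
    nlinarith
  have hc : 0 ≤ 2 * lamMax X * Rmax ^ 2 :=
    mul_nonneg (by linarith) (sq_nonneg Rmax)
  calc 2 * lamMax X * Rmax ^ 2 * (1 - π a') ^ 2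
      ≤ 2 * lamMax X * Rmax ^ 2 * 1 := mul_le_mul_of_nonneg_left h01 hc
    _ = 2 * lamMax X * Rmax ^ 2 := mul_one _
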